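/- Let X be a reflexive real Banach space and let A, B : X → ℝ be continuously Fréchet differentiable functionals satisfying: (1) A is sequentially weakly lower semicontinuous, and for every constant c, A(xₙ) → +∞ whenever (xₙ) is a sequence with B(xₙ) ≤ c for all n and ‖xₙ‖ → ∞; (2) B is sequentially weakly continuous (xₙ ⇀ x weakly implies B(xₙ) → B(x)), B(0) = 0, and B′(x) = 0 only at x = 0. Then for every R ≠ 0 in the range of B there exist x_R ∈ X and λ_R ∈ ℝ such that B(x_R) = R, A′(x_R) = λ_R · B′(x_R), and A(x_R) = inf{ A(y) : y ∈ X, B(y) = R }. -/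

import Mathlib

open Filter Topology

/-- Weak convergence of a sequence in a normed space: testing against all
continuous linear functionals. -/
def WeaklyConvergesTo {X : Type*} [NormedAddCommGroup X] [NormedSpace ℝ X]
    (x : ℕ → X) (x₀ : X) : Prop :=
  ∀ φ : StrongDual ℝ X, Tendsto (fun n => φ (x n)) atTop (𝓝 (φ x₀))

open NormedSpace TopologicalSpace

/-! A minimizing sequence of `A` on the level set `{B = R}` is norm-bounded by coercivity, and
bounded sequences in a reflexive space have weakly convergent subsequences: the closed span `Y` of
the sequence is separable and reflexive, so `Y** ≅ Y` and hence `Y*` are separable, and sequential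
Banach–Alaoglu applies in `Y** = (Y*)*`. The weak limit `x_R` stays on the level set because `B` is
weakly sequentially continuous, and minimizes `A` there by weak lower semicontinuity. As
`B 0 = 0 ≠ R`, `x_R ≠ 0`, so `B′(x_R) ≠ 0` and the Lagrange multiplier rule gives
`A′(x_R) = λ B′(x_R)`. -/

def CoerciveOn {E : Type*} [Norm E] (A : E → ℝ) (C : Set E) : Prop :=
  ∀ x : ℕ → E, (∀ n, x n ∈ C) → Tendsto (fun n => ‖x n‖) atTop atTop →
    Tendsto (fun n => A (x n)) atTop atTop

lemma CoerciveOn.exists_norm_le {E : Type*} [Norm E] {A : E → ℝ} {C : Set E}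
    (hcoer : CoerciveOn A C) {x : ℕ → E} (hxC : ∀ n, x n ∈ C) {K : ℝ} (hK : ∀ n, A (x n) ≤ K) :
    ∃ M, ∀ n, ‖x n‖ ≤ M := by
  by_contra! h
  choose n hn using h
  have hnorm : Tendsto (fun k : ℕ => ‖x (n k)‖) atTop atTop :=
    tendsto_atTop_mono (fun k => (hn k).le) tendsto_natCast_atTop_atTop
  obtain ⟨k, hk⟩ := ((hcoer _ (fun k => hxC (n k)) hnorm).eventually_gt_atTop K).exists
  exact (hK _).not_gt hk

section

variable {E : Type*} [NormedAddCommGroup E] [NormedSpace ℝ E]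

lemma Submodule.exists_strongDual_ne_zero_of_notMem {p : Submodule ℝ E}
    (hp : IsClosed (p : Set E)) {x : E} (hx : x ∉ p) :
    ∃ f : StrongDual ℝ E, (∀ y ∈ p, f y = 0) ∧ f x ≠ 0 := by
  have hx' : ‖p.mkQ x‖ ≠ 0 := fun h => hx <| by
    simpa [hp.closure_eq] using QuotientAddGroup.norm_mk_eq_zero_iff_mem_closure.1 h
  obtain ⟨g, -, hg⟩ := exists_dual_vector ℝ (p.mkQ x) hx'
  refine ⟨g.comp p.mkQL, fun y hy => ?_, ?_⟩
  · simp [(Submodule.Quotient.mk_eq_zero p).2 hy]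
  · rw [ContinuousLinearMap.comp_apply, Submodule.mkQL_apply, hg]
    exact hx'

lemma separableSpace_of_separableSpace_strongDual [SeparableSpace (StrongDual ℝ E)] :
    SeparableSpace E := by
  obtain ⟨u, hu⟩ := exists_dense_seq (StrongDual ℝ E)
  have hnorming : ∀ k, ∃ v : E, ‖v‖ ≤ 1 ∧ ‖u k‖ / 2 ≤ ‖u k v‖ := by
    intro k
    rcases eq_or_ne (u k) 0 with h | h
    · exact ⟨0, by simp [h]⟩
    · obtain ⟨v, hv, huv⟩ := (u k).exists_lt_apply_of_lt_opNorm
        (half_lt_self (norm_pos_iff.2 h))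
      exact ⟨v, hv.le, huv.le⟩
  choose v hv1 hv2 using hnorming
  set p := Submodule.span ℝ (Set.range v)
  have hdense : p.topologicalClosure = ⊤ := by
    refine Submodule.eq_top_iff'.2 fun x => by_contra fun hx => ?_
    obtain ⟨f, hf0, hfx⟩ :=
      Submodule.exists_strongDual_ne_zero_of_notMem p.isClosed_topologicalClosure hx
    -- `f` kills every `v k`, which nearly norm the `u k`, so `f` is far from all `u k`
    have hfu : ∀ k, ‖f‖ ≤ 3 * ‖f - u k‖ := by
      intro k
      have hvk : v k ∈ p.topologicalClosure :=
        p.le_topologicalClosure (Submodule.subset_span ⟨k, rfl⟩)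
      have : ‖u k‖ / 2 ≤ ‖f - u k‖ :=
        calc ‖u k‖ / 2 ≤ ‖u k (v k)‖ := hv2 k
          _ = ‖(f - u k) (v k)‖ := by simp [hf0 _ hvk]
          _ ≤ ‖f - u k‖ * ‖v k‖ := (f - u k).le_opNorm _
          _ ≤ ‖f - u k‖ := mul_le_of_le_one_right (norm_nonneg _) (hv1 k)
      linarith [norm_le_norm_add_norm_sub' f (u k)]
    have hf : f = 0 := norm_le_zero_iff.1 <| le_of_forall_pos_lt_add fun ε hε => by
      obtain ⟨k, hk⟩ := Metric.denseRange_iff.1 hu f (ε / 3) (by positivity)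
      linarith [hfu k, dist_eq_norm f (u k)]
    exact hfx (by simp [hf])
  have hsep : IsSeparable (p.topologicalClosure : Set E) := by
    simpa [Submodule.topologicalClosure_coe] using
      (Set.countable_range v).isSeparable.span.closure
  rw [hdense, Submodule.top_coe] at hsep
  exact isSeparable_univ_iff.1 hsep

lemma Submodule.surjective_inclusionInDoubleDual
    (hrefl : Function.Surjective (inclusionInDoubleDual ℝ E)) {Y : Submodule ℝ E}
    (hY : IsClosed (Y : Set E)) : Function.Surjective (inclusionInDoubleDual ℝ Y) := by
  intro F
  let restrict : StrongDual ℝ E →L[ℝ] StrongDual ℝ Y :=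
    (ContinuousLinearMap.compL ℝ Y E ℝ).flip Y.subtypeL
  obtain ⟨x, hx⟩ := hrefl (F.comp restrict)
  have hxF : ∀ f : StrongDual ℝ E, f x = F (restrict f) := fun f => congr($hx f)
  have hxY : x ∈ Y := by
    by_contra hxY
    obtain ⟨f, hf0, hfx⟩ := Submodule.exists_strongDual_ne_zero_of_notMem hY hxY
    have : restrict f = 0 := by ext y; exact hf0 y y.2
    exact hfx (by rw [hxF, this, map_zero])
  refine ⟨⟨x, hxY⟩, ContinuousLinearMap.ext fun g => ?_⟩
  obtain ⟨f, hfg, -⟩ := exists_extension_norm_eq Y g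
  have : restrict f = g := ContinuousLinearMap.ext hfg
  rw [dual_def, ← hfg, ← this]
  exact hxF f

theorem exists_weaklyConvergesTo_subseq_of_separableSpace [SeparableSpace E]
    (hrefl : Function.Surjective (inclusionInDoubleDual ℝ E)) {x : ℕ → E} {M : ℝ}
    (hM : ∀ n, ‖x n‖ ≤ M) :
    ∃ (x₀ : E) (σ : ℕ → ℕ), StrictMono σ ∧ WeaklyConvergesTo (x ∘ σ) x₀ := by
  have : SeparableSpace (StrongDual ℝ (StrongDual ℝ E)) :=
    hrefl.denseRange.separableSpace (inclusionInDoubleDual ℝ E).continuous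
  have : SeparableSpace (StrongDual ℝ E) :=
    separableSpace_of_separableSpace_strongDual (E := StrongDual ℝ E)
  have hx : ∀ n, StrongDual.toWeakDual (inclusionInDoubleDual ℝ E (x n)) ∈
      WeakDual.toStrongDual ⁻¹' Metric.closedBall 0 M :=
    fun n => mem_closedBall_zero_iff (E := StrongDual ℝ (StrongDual ℝ E)) |>.2 <|
      (double_dual_bound ℝ E (x n)).trans (hM n)
  obtain ⟨F, -, σ, hσ, hF⟩ := WeakDual.isSeqCompact_closedBall ℝ (StrongDual ℝ E) 0 M hx
  obtain ⟨x₀, hx₀⟩ := hrefl (WeakDual.toStrongDual F)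
  refine ⟨x₀, σ, hσ, fun f => ?_⟩
  have := tendsto_iff_forall_eval_tendsto_topDualPairing.1 hF f
  rwa [show topDualPairing ℝ _ F f = f x₀ from congr($hx₀ f).symm] at this

theorem exists_weaklyConvergesTo_subseq
    (hrefl : Function.Surjective (inclusionInDoubleDual ℝ E)) {x : ℕ → E} {M : ℝ}
    (hM : ∀ n, ‖x n‖ ≤ M) :
    ∃ (x₀ : E) (σ : ℕ → ℕ), StrictMono σ ∧ WeaklyConvergesTo (x ∘ σ) x₀ := by
  set Y := (Submodule.span ℝ (Set.range x)).topologicalClosure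
  have hxY : ∀ n, x n ∈ Y := fun n =>
    Submodule.le_topologicalClosure _ (Submodule.subset_span ⟨n, rfl⟩)
  have : SeparableSpace Y := by
    refine IsSeparable.separableSpace ?_
    simpa [Y, Submodule.topologicalClosure_coe] using
      (Set.countable_range x).isSeparable.span.closure
  obtain ⟨y, σ, hσ, hy⟩ := exists_weaklyConvergesTo_subseq_of_separableSpace
    (Submodule.surjective_inclusionInDoubleDual hrefl (Submodule.isClosed_topologicalClosure _))
    (x := fun n => (⟨x n, hxY n⟩ : Y)) hM
  exact ⟨y, σ, hσ, fun f => hy (f.comp Y.subtypeL)⟩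

def IsWeaklySeqClosed (C : Set E) : Prop :=
  ∀ (x : ℕ → E) (x₀ : E), (∀ n, x n ∈ C) → WeaklyConvergesTo x x₀ → x₀ ∈ C

def WeaklySeqLowerSemicontinuous (A : E → ℝ) : Prop :=
  ∀ (x : ℕ → E) (x₀ : E), WeaklyConvergesTo x x₀ → A x₀ ≤ liminf (fun n => A (x n)) atTop

lemma WeaklyConvergesTo.comp_strictMono {x : ℕ → E} {x₀ : E} (hx : WeaklyConvergesTo x x₀)
    {σ : ℕ → ℕ} (hσ : StrictMono σ) : WeaklyConvergesTo (x ∘ σ) x₀ :=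
  fun f => (hx f).comp hσ.tendsto_atTop

lemma WeaklyConvergesTo.add_smul_sub {x : ℕ → E} {x₀ : E} (hx : WeaklyConvergesTo x x₀)
    {t : ℕ → ℝ} (ht : ∀ n, t n ∈ Set.Icc (0 : ℝ) 1) :
    WeaklyConvergesTo (fun n => x₀ + t n • (x n - x₀)) x₀ := by
  intro f
  have h : Tendsto (fun n => t n * (f (x n) - f x₀)) atTop (𝓝 0) :=
    bdd_le_mul_tendsto_zero (.of_forall fun n => (ht n).1) (.of_forall fun n => (ht n).2)
      (by simpa using (hx f).sub_const (f x₀))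
  simpa using h.const_add (f x₀)

lemma WeaklySeqLowerSemicontinuous.le_of_frequently_le {A : E → ℝ}
    (hlsc : WeaklySeqLowerSemicontinuous A) (hA : Continuous A) {x : ℕ → E} {x₀ : E}
    (hx : WeaklyConvergesTo x x₀) {c : ℝ} (hc : ∃ᶠ n in atTop, A (x n) ≤ c) : A x₀ ≤ c := by
  by_contra! hlt
  obtain ⟨σ, hσ, hσc⟩ := extraction_of_frequently_atTop hc
  -- `liminf` in `ℝ` is a junk value unless the sequence is bounded, so `hlsc` is only applied to a
  -- sequence on which `A` is constant: points of the segments `[x₀, x (σ n)]` where `A = c`.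
  have hseg : ∀ n, ∃ t ∈ Set.Icc (0 : ℝ) 1, A (x₀ + t • (x (σ n) - x₀)) = c := by
    intro n
    have hcont : ContinuousOn (fun t : ℝ => A (x₀ + t • (x (σ n) - x₀))) (Set.Icc 0 1) := by
      fun_prop
    exact intermediate_value_Icc' zero_le_one hcont ⟨by simpa using hσc n, by simpa using hlt.le⟩
  choose t ht htc using hseg
  have := hlsc _ _ ((hx.comp_strictMono hσ).add_smul_sub ht)
  simp only [Function.comp_apply, htc, liminf_const] at this
  linarith

lemma exists_mem_le_of_eventually_le (hrefl : Function.Surjective (inclusionInDoubleDual ℝ E))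
    {A : E → ℝ} (hA : Continuous A) (hlsc : WeaklySeqLowerSemicontinuous A) {C : Set E}
    (hC : IsWeaklySeqClosed C) (hcoer : CoerciveOn A C) {y : ℕ → E} (hyC : ∀ n, y n ∈ C) {K : ℝ}
    (hK : ∀ n, A (y n) ≤ K) : ∃ x₀ ∈ C, ∀ c, (∀ᶠ n in atTop, A (y n) ≤ c) → A x₀ ≤ c := by
  obtain ⟨M, hM⟩ := hcoer.exists_norm_le hyC hK
  obtain ⟨x₀, σ, hσ, hx₀⟩ := exists_weaklyConvergesTo_subseq hrefl hM
  refine ⟨x₀, hC _ _ (fun n => hyC (σ n)) hx₀, fun c hc => ?_⟩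
  exact hlsc.le_of_frequently_le hA hx₀ (hσ.tendsto_atTop.eventually hc).frequently

theorem exists_isMinOn_of_coerciveOn (hrefl : Function.Surjective (inclusionInDoubleDual ℝ E))
    {A : E → ℝ} (hA : Continuous A) (hlsc : WeaklySeqLowerSemicontinuous A) {C : Set E}
    (hC : IsWeaklySeqClosed C) (hCne : C.Nonempty) (hcoer : CoerciveOn A C) :
    ∃ x₀ ∈ C, IsMinOn A C x₀ := by
  have hbdd : BddBelow (A '' C) := by
    by_contra hunbdd
    have : ∀ n : ℕ, ∃ y ∈ C, A y ≤ -n := fun n => by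
      obtain ⟨_, ⟨y, hy, rfl⟩, hlt⟩ := not_bddBelow_iff.1 hunbdd (-n)
      exact ⟨y, hy, hlt.le⟩
    choose y hyC hyA using this
    obtain ⟨x₀, -, hx₀⟩ := exists_mem_le_of_eventually_le hrefl hA hlsc hC hcoer hyC
      (fun n => (hyA n).trans (neg_nonpos.2 n.cast_nonneg))
    have hbot : Tendsto (fun n => A (y n)) atTop atBot :=
      tendsto_atBot_mono hyA (tendsto_neg_atTop_atBot.comp tendsto_natCast_atTop_atTop)
    linarith [hx₀ _ (hbot.eventually_le_atBot (A x₀ - 1))]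
  obtain ⟨u, hu_anti, hu, huC⟩ := exists_seq_tendsto_sInf (hCne.image A) hbdd
  choose y hyC hyu using huC
  obtain ⟨x₀, hx₀C, hx₀⟩ := exists_mem_le_of_eventually_le hrefl hA hlsc hC hcoer hyC
    (fun n => (hyu n).trans_le (hu_anti n.zero_le))
  refine ⟨x₀, hx₀C, fun z hz => ?_⟩
  refine le_trans (le_of_forall_pos_le_add fun ε hε => hx₀ _ ?_) (csInf_le hbdd ⟨z, hz, rfl⟩)
  simpa only [hyu] using hu.eventually (eventually_le_nhds (lt_add_of_pos_right _ hε))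

end

lemma IsLocalExtrOn.exists_eq_smul_of_hasStrictFDerivAt {E : Type*} [NormedAddCommGroup E]
    [NormedSpace ℝ E] [CompleteSpace E] {f φ : E → ℝ} {x₀ : E} {f' φ' : StrongDual ℝ E}
    (hextr : IsLocalExtrOn φ {x | f x = f x₀} x₀) (hf : HasStrictFDerivAt f f' x₀)
    (hφ : HasStrictFDerivAt φ φ' x₀) (hf' : f' ≠ 0) : ∃ l : ℝ, φ' = l • f' := by
  obtain ⟨a, b, hab, h⟩ := hextr.exists_multipliers_of_hasStrictFDerivAt_1d hf hφ
  have hb : b ≠ 0 := by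
    rintro rfl
    have ha : a ≠ 0 := fun ha => hab (by simp [ha])
    exact hf' (by simpa [ha] using h)
  refine ⟨-a / b, ?_⟩
  ext v
  have hv : a * f' v + b * φ' v = 0 := by simpa using congr($h v)
  rw [smul_apply, smul_eq_mul]
  field_simp
  linarith

/-- Berger's theorem on the nonlinear eigenvalue problem `A′(x) = λ B′(x)`
in a reflexive Banach space. -/
theorem stmt_11 {X : Type*} [NormedAddCommGroup X] [NormedSpace ℝ X]
    [CompleteSpace X]
    (hrefl : Function.Surjective (NormedSpace.inclusionInDoubleDual ℝ X))
    (A B : X → ℝ) (hA : ContDiff ℝ 1 A) (hB : ContDiff ℝ 1 B)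
    -- (1) A is sequentially weakly lower semicontinuous ...
    (hAwlsc : ∀ (x : ℕ → X) (x₀ : X), WeaklyConvergesTo x x₀ →
      A x₀ ≤ liminf (fun n => A (x n)) atTop)
    -- ... and coercive on the sublevel sets of B
    (hAcoer : ∀ c : ℝ, ∀ x : ℕ → X, (∀ n, B (x n) ≤ c) →
      Tendsto (fun n => ‖x n‖) atTop atTop →
      Tendsto (fun n => A (x n)) atTop atTop)
    -- (2) B is sequentially weakly continuous, B 0 = 0, and B′(x) = 0 only at x = 0
    (hBwc : ∀ (x : ℕ → X) (x₀ : X), WeaklyConvergesTo x x₀ →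
      Tendsto (fun n => B (x n)) atTop (𝓝 (B x₀)))
    (hB0 : B 0 = 0)
    (hB' : ∀ x : X, fderiv ℝ B x = 0 → x = 0) :
    ∀ R : ℝ, R ≠ 0 → (∃ y, B y = R) →
      ∃ (xR : X) (lR : ℝ), B xR = R ∧ fderiv ℝ A xR = lR • fderiv ℝ B xR ∧
        A xR = sInf {a : ℝ | ∃ y, B y = R ∧ a = A y} := by
  intro R hR ⟨y, hy⟩
  have hC : IsWeaklySeqClosed {x | B x = R} := fun x x₀ hxC hx =>
    tendsto_nhds_unique (hBwc x x₀ hx) (tendsto_const_nhds.congr fun n => (hxC n).symm)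
  obtain ⟨xR, hxR, hmin⟩ := exists_isMinOn_of_coerciveOn hrefl hA.continuous hAwlsc hC ⟨y, hy⟩
    fun x hxC => hAcoer R x fun n => (hxC n).le
  have hB'xR : fderiv ℝ B xR ≠ 0 := fun h => hR (by rw [← hxR, hB' xR h, hB0])
  have hextr : IsLocalExtrOn A {x | B x = B xR} xR := by
    rw [hxR]
    exact Or.inl hmin.localize
  obtain ⟨l, hl⟩ := hextr.exists_eq_smul_of_hasStrictFDerivAt
    (hB.hasStrictFDerivAt one_ne_zero) (hA.hasStrictFDerivAt one_ne_zero) hB'xR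
  have hleast : IsLeast {a : ℝ | ∃ y, B y = R ∧ a = A y} (A xR) :=
    ⟨⟨xR, hxR, rfl⟩, by rintro _ ⟨z, hz, rfl⟩; exact hmin hz⟩
  exact ⟨xR, l, hxR, hl, hleast.csInf_eq.symm⟩
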